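/- For every integer ℓ ≥ 1 and every integer i with 0 ≤ i ≤ 2^{ℓ−1} − 1, the quantity R(i,ℓ) := 2^{1−3ℓ} · (2^{ℓ−1} + i)² · (2^{ℓ+1} − 3i) satisfies 1 ≤ R(i,ℓ) ≤ 343/243; in particular R(i,ℓ) < 2, and R(0,ℓ) = 1. -/
import Mathlib


/-- The ratio `R(i,ℓ) = 2^{1−3ℓ} · (2^{ℓ−1} + i)² · (2^{ℓ+1} − 3i)`. -/
noncomputable def Rfun (ℓ i : ℕ) : ℝ :=
  (2 : ℝ) ^ ((1 : ℤ) - 3 * (ℓ : ℤ)) * ((2 : ℝ) ^ (ℓ - 1) + (i : ℝ)) ^ 2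
    * ((2 : ℝ) ^ (ℓ + 1) - 3 * (i : ℝ))

lemma Rfun_eq (k i : ℕ) :
    Rfun (k + 1) i =
      (((2 : ℝ) ^ k + (i : ℝ)) ^ 2 * (4 * (2 : ℝ) ^ k - 3 * (i : ℝ)))
        / (4 * ((2 : ℝ) ^ k) ^ 3) := by
  have h1 : ((1 : ℤ) - 3 * ((k + 1 : ℕ) : ℤ)) = -((3 * k + 2 : ℕ) : ℤ) := by
    push_cast; ring
  have h2 : (2 : ℝ) ^ ((1 : ℤ) - 3 * ((k + 1 : ℕ) : ℤ))
      = ((2 : ℝ) ^ (3 * k + 2))⁻¹ := by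
    rw [h1, zpow_neg, zpow_natCast]
  have h3 : (2 : ℝ) ^ (3 * k + 2) = 4 * ((2 : ℝ) ^ k) ^ 3 := by
    rw [pow_add, mul_comm 3 k, pow_mul]; ring
  have h4 : (2 : ℝ) ^ (k + 1 + 1) = 4 * (2 : ℝ) ^ k := by
    rw [pow_add]; ring
  have h5 : (k + 1 : ℕ) - 1 = k := rfl
  rw [Rfun, h2, h3, h4, h5]
  field_simp

theorem statement_16 (ℓ : ℕ) (hℓ : 1 ≤ ℓ) :
    (∀ i : ℕ, i ≤ 2 ^ (ℓ - 1) - 1 →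
      1 ≤ Rfun ℓ i ∧ Rfun ℓ i ≤ 343 / 243 ∧ Rfun ℓ i < 2)
    ∧ Rfun ℓ 0 = 1 := by
  obtain ⟨k, rfl⟩ : ∃ k, ℓ = k + 1 := ⟨ℓ - 1, (Nat.succ_pred_eq_of_pos hℓ).symm⟩
  have hm1 : (1 : ℝ) ≤ (2 : ℝ) ^ k := one_le_pow₀ (by norm_num)
  have hmpos : (0 : ℝ) < (2 : ℝ) ^ k := by linarith
  constructor
  · intro i hi
    have hi' : (i : ℝ) ≤ (2 : ℝ) ^ k - 1 := by
      have : i + 1 ≤ 2 ^ k := by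
        have hb : 1 ≤ 2 ^ k := Nat.one_le_two_pow
        simp only [Nat.add_sub_cancel] at hi
        omega
      have := (Nat.cast_le (α := ℝ)).2 this
      push_cast at this
      push_cast
      linarith
    have hx0 : (0 : ℝ) ≤ (i : ℝ) := Nat.cast_nonneg i
    set m : ℝ := (2 : ℝ) ^ k with hm
    set x : ℝ := (i : ℝ) with hxdef
    have hden : (0 : ℝ) < 4 * m ^ 3 := by positivity
    rw [Rfun_eq]
    refine ⟨?_, ?_, ?_⟩
    · rw [le_div_iff₀ hden]
      nlinarith [mul_nonneg (mul_nonneg hx0 (by linarith : (0:ℝ) ≤ 5*m + 3*x))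
        (by linarith : (0:ℝ) ≤ m - x)]
    · rw [div_le_iff₀ hden]
      nlinarith [mul_nonneg (mul_nonneg (sq_nonneg (9*x - 5*m))
        (by linarith : (0:ℝ) ≤ 9*x + 16*m)) (le_of_lt hmpos)]
    · rw [div_lt_iff₀ hden]
      nlinarith [mul_nonneg (mul_nonneg (sq_nonneg (9*x - 5*m))
        (by linarith : (0:ℝ) ≤ 9*x + 16*m)) (le_of_lt hmpos)]
  · rw [Rfun_eq]
    push_cast
    field_simp
    ring
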